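/- arXiv:math-ph/0505003 — 3 statements merged into one kernel-verified Lean document; each statement's English description precedes it below -/
import Mathlib

section
/- For the flip-model relation with odd n (Φ_n(p) = n+1−p having the fixed point (n+1)/2), the set of triples (p,q,p') with (p,q) ~_n (q,p') and p ≠ p' has cardinality at most n−1; in particular it is o(n^2), so condition (C3) holds. -/
/-!
If `(p, q) ~ (q, p')` with `p ≠ p'`, the only one of the four generators that can relate the two
pairs is `(p, q) ↦ (Φ q, Φ p)`, so `q` is a fixed point of `Φ` and `p' = Φ p ≠ p`. Hence such
triples correspond to pairs (non-fixed point, fixed point) of `Φ`. Since `Φ` has at most one fixed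
point (`2q + 1 = n`), their number is `(n - f) * f` with `f ≤ 1`.
-/

/-- The flip-model equivalence relation on pairs of indices in `{1,...,n}`
(indices modeled by `Fin n`, with the involution `Φ n (p) = n + 1 - p` given by
`Fin.rev`): `(p,q) ~ (q,p) ~ (Φ p, Φ q) ~ (Φ q, Φ p)`. -/
def flipRel (n : ℕ) (P Q : Fin n × Fin n) : Prop :=
  Q = P ∨ Q = P.swap ∨ Q = (P.1.rev, P.2.rev) ∨ Q = (P.2.rev, P.1.rev)

namespace Fin

theorem rev_eq_self_iff {n : ℕ} {i : Fin n} : i.rev = i ↔ 2 * (i : ℕ) + 1 = n := by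
  rw [Fin.ext_iff, val_rev]
  omega

instance subsingleton_rev_fixed (n : ℕ) : Subsingleton {i : Fin n // i.rev = i} :=
  ⟨fun i j => Subtype.ext <| Fin.ext <| by
    have hi := rev_eq_self_iff.mp i.2
    have hj := rev_eq_self_iff.mp j.2
    omega⟩

end Fin

theorem flipRel_chain_and_ne_iff {n : ℕ} {p q p' : Fin n} :
    flipRel n (p, q) (q, p') ∧ p ≠ p' ↔ q.rev = q ∧ p' = p.rev ∧ p.rev ≠ p := by
  simp only [flipRel, Prod.swap_prod_mk, Prod.mk.injEq]
  constructor
  · rintro ⟨⟨rfl, rfl⟩ | ⟨-, rfl⟩ | ⟨rfl, rfl⟩ | ⟨hq, rfl⟩, hne⟩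
    · exact absurd rfl hne
    · exact absurd rfl hne
    · exact absurd (Fin.rev_rev p).symm hne
    · exact ⟨hq.symm, rfl, hne.symm⟩
  · rintro ⟨hq, rfl, hne⟩
    exact ⟨Or.inr (Or.inr (Or.inr ⟨hq.symm, rfl⟩)), Ne.symm hne⟩

def flipChainEquiv (n : ℕ) :
    {t : Fin n × Fin n × Fin n // flipRel n (t.1, t.2.1) (t.2.1, t.2.2) ∧ t.1 ≠ t.2.2} ≃
      {p : Fin n // p.rev ≠ p} × {q : Fin n // q.rev = q} where
  toFun t :=
    have h := flipRel_chain_and_ne_iff.mp t.2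
    (⟨t.1.1, h.2.2⟩, ⟨t.1.2.1, h.1⟩)
  invFun x := ⟨(x.1, x.2, x.1.1.rev), flipRel_chain_and_ne_iff.mpr ⟨x.2.2, rfl, x.1.2⟩⟩
  left_inv := by
    rintro ⟨⟨p, q, p'⟩, h⟩
    obtain ⟨-, hp' : p' = p.rev, -⟩ := flipRel_chain_and_ne_iff.mp h
    subst hp'
    rfl
  right_inv _ := rfl

theorem flipRel_odd_C3_general (n : ℕ) :
    Nat.card {t : Fin n × Fin n × Fin n //
      flipRel n (t.1, t.2.1) (t.2.1, t.2.2) ∧ t.1 ≠ t.2.2} ≤ n - 1 := by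
  rw [Nat.card_congr (flipChainEquiv n), Nat.card_prod, Nat.card_eq_fintype_card,
    Nat.card_eq_fintype_card, Fintype.card_subtype_compl, Fintype.card_fin]
  have hfix : Fintype.card {q : Fin n // q.rev = q} ≤ 1 :=
    Fintype.card_le_one_iff_subsingleton.mpr inferInstance
  interval_cases Fintype.card {q : Fin n // q.rev = q} <;> omega

/-- For odd `n` (where `Φ n` has the fixed point `(n+1)/2`), the set of triples
`(p, q, p')` with `(p,q) ~ₙ (q,p')` and `p ≠ p'` has cardinality at most
`n - 1`; in particular it is `o(n²)`, so condition (C3) holds for the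
flip model. -/
theorem flipRel_odd_C3 (n : ℕ) (hn : Odd n) :
    Nat.card {t : Fin n × Fin n × Fin n //
      flipRel n (t.1, t.2.1) (t.2.1, t.2.2) ∧ t.1 ≠ t.2.2} ≤ n - 1 :=
  flipRel_odd_C3_general n
end

section
/- Counterexample relation violates (C3): let ~_n be the equivalence relation on {1,...,n}^2 generated by (p,q) ~ (q,p) ~ (Φ_n(p),q) ~ (Φ_n(q),Φ_n(p)), with Φ_n(p) = n+1−p. Then (p,q) ~_n (q,Φ_n(p)) for every p,q, so the number of triples (p,q,p') with (p,q) ~_n (q,p') and p ≠ p' is at least n(n−1). -/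
/-- The generating relation of the counterexample model on pairs of indices in
`{1,...,n}` (indices modeled by `Fin n`, involution `Φ n (p) = n + 1 - p` given
by `Fin.rev`): `(p,q) ~ (q,p)`, `(p,q) ~ (Φ p, q)`, `(p,q) ~ (Φ q, Φ p)`. -/
def badGen (n : ℕ) (P Q : Fin n × Fin n) : Prop :=
  Q = P.swap ∨ Q = (P.1.rev, P.2) ∨ Q = (P.2.rev, P.1.rev)

/-- The equivalence relation generated by `badGen`. -/
def badRel (n : ℕ) : (Fin n × Fin n) → (Fin n × Fin n) → Prop :=
  Relation.EqvGen (badGen n)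

/-!
Since `(p, q) ~ (Φ p, q) ~ (q, Φ p)`, every pair `(q, p)` with `Φ p ≠ p` yields the triple
`(p, q, Φ p)`, and distinct pairs yield distinct triples. The involution `Φ = Fin.rev` has at
most one fixed point, so there are at least `n (n - 1)` such pairs.
-/

theorem badRel_swap_rev (n : ℕ) (p q : Fin n) : badRel n (p, q) (q, p.rev) :=
  .trans _ (p.rev, q) _ (.rel _ _ (.inr (.inl rfl))) (.rel _ _ (.inl rfl))

theorem Fin.subsingleton_setOf_rev_eq_self (n : ℕ) : {p : Fin n | p.rev = p}.Subsingleton := by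
  intro p hp q hq
  have hp' := congrArg Fin.val hp
  have hq' := congrArg Fin.val hq
  simp only [Fin.val_rev] at hp' hq'
  omega

theorem Fin.sub_one_le_card_rev_ne_self (n : ℕ) : n - 1 ≤ Nat.card {p : Fin n // p.rev ≠ p} := by
  have hfixed : Nat.card {p : Fin n // p.rev = p} ≤ 1 :=
    Finite.card_le_one_iff_subsingleton.mpr (Fin.subsingleton_setOf_rev_eq_self n).coe_sort
  rw [Nat.card_eq_fintype_card, Fintype.card_subtype_compl, Fintype.card_fin,
    ← Nat.card_eq_fintype_card]
  omega

theorem card_mul_card_moved_le_card_triples {α : Type*} [Finite α] (r : α × α → α × α → Prop)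
    (f : α → α) (hr : ∀ p q, r (p, q) (q, f p)) :
    Nat.card α * Nat.card {p // f p ≠ p} ≤
      Nat.card {t : α × α × α // r (t.1, t.2.1) (t.2.1, t.2.2) ∧ t.1 ≠ t.2.2} := by
  rw [← Nat.card_prod]
  refine Nat.card_le_card_of_injective (fun x ↦ ⟨(x.2.1, x.1, f x.2.1), hr _ _, x.2.2.symm⟩) ?_
  rintro ⟨q, p, hp⟩ ⟨q', p', hp'⟩ h
  simp only [Subtype.mk.injEq, Prod.mk.injEq] at h
  obtain ⟨rfl, rfl, -⟩ := h
  rfl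

/-- The counterexample relation violates (C3): `(p,q) ~ₙ (q, Φ p)` for every
`p, q`, and hence the number of triples `(p,q,p')` with `(p,q) ~ₙ (q,p')` and
`p ≠ p'` is at least `n(n-1)`, which is not `o(n²)`. -/
theorem badRel_violates_C3 (n : ℕ) :
    (∀ p q : Fin n, badRel n (p, q) (q, p.rev)) ∧
    n * (n - 1) ≤ Nat.card {t : Fin n × Fin n × Fin n //
      badRel n (t.1, t.2.1) (t.2.1, t.2.2) ∧ t.1 ≠ t.2.2} := by
  refine ⟨badRel_swap_rev n, ?_⟩
  calc n * (n - 1) ≤ Nat.card (Fin n) * Nat.card {p : Fin n // p.rev ≠ p} := by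
        rw [Nat.card_fin]
        exact Nat.mul_le_mul_left n (Fin.sub_one_le_card_rev_ne_self n)
    _ ≤ _ := card_mul_card_moved_le_card_triples _ _ (badRel_swap_rev n)
end

section
/- Intersection of nearly tangent spherical shells: fix E > 0 and β > 0, and let q ∈ ℝ^d with |q|² /2 = E. The set {p ∈ ℝ^d : ||p|²/2 − E| ≤ β/L and |(p−2q)²/2 − E| ≤ β/L} has Lebesgue measure O(L^{−(d+1)/2}) as L → ∞. -/
/-!
Subtracting the two shell conditions gives `|⟪q, p⟫ - ‖q‖²| ≤ β / L`, so `p` lies in a slab of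
width `2β / (L ‖q‖)` orthogonal to `q`. On that slab `⟪q/‖q‖, p⟫² ≥ ‖q‖² - 2β / L`, while
`‖p‖² ≤ ‖q‖² + 2β / L`; hence the component of `p` orthogonal to `q` has length at most
`2 √(β / L)`. In an orthonormal basis starting with `q/‖q‖` the set therefore lies in a box of
volume `(2β / (L ‖q‖)) · (4 √(β / L))^(d-1) = O(L^(-(d+1)/2))`.
-/

open MeasureTheory Module Set
open scoped RealInnerProductSpace

theorem Real.rpow_neg_natCast_div_two {x : ℝ} (hx : 0 ≤ x) (n : ℕ) :
    x ^ (-((n : ℝ) / 2)) = (√x)⁻¹ ^ n := by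
  rw [Real.rpow_neg hx, inv_pow, Real.sqrt_eq_rpow, ← Real.rpow_natCast, ← Real.rpow_mul hx,
    one_div_mul_eq_div]

theorem sq_sub_two_mul_le_sq_of_sub_le {r a t : ℝ} (hr : 0 ≤ r) (h : r - a ≤ t) :
    r ^ 2 - 2 * r * a ≤ t ^ 2 := by
  rcases le_total 0 (r - a) with ha | ha
  · nlinarith [mul_self_le_mul_self ha h, sq_nonneg a]
  · nlinarith [mul_nonpos_of_nonneg_of_nonpos hr ha, sq_nonneg t]

section InnerProductSpace

variable {ι V : Type*} [Fintype ι] [NormedAddCommGroup V] [InnerProductSpace ℝ V]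

theorem OrthonormalBasis.sq_repr_apply_le_of_ne (b : OrthonormalBasis ι ℝ V) (p : V) {i j : ι}
    (hij : i ≠ j) : b.repr p i ^ 2 ≤ ‖p‖ ^ 2 - b.repr p j ^ 2 := by
  classical
  have h := Finset.sum_le_univ_sum_of_nonneg (s := {i, j}) (f := fun k => b.repr p k ^ 2)
    fun _ => sq_nonneg _
  rw [Finset.sum_pair hij] at h
  rw [← b.repr.norm_map, EuclideanSpace.real_norm_sq_eq]
  linarith

theorem exists_orthonormalBasis_fin_apply_eq [FiniteDimensional ℝ V] {u : V} (hu : ‖u‖ = 1) :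
    ∃ (i₀ : Fin (finrank ℝ V)) (b : OrthonormalBasis (Fin (finrank ℝ V)) ℝ V), b i₀ = u := by
  have hn : 0 < finrank ℝ V :=
    finrank_pos_iff_exists_ne_zero.2 ⟨u, norm_ne_zero_iff.1 (by simp [hu])⟩
  let i₀ : Fin (finrank ℝ V) := ⟨0, hn⟩
  have hv : Orthonormal ℝ (({i₀} : Set _).domRestrict fun _ => u) :=
    orthonormal_subsingleton_iff.2 fun _ => hu
  obtain ⟨b, hb⟩ := hv.exists_orthonormalBasis_extension_of_card_eq (by simp)
  exact ⟨i₀, b, hb i₀ rfl⟩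

theorem abs_inner_sub_norm_sq_le_of_mem_shells {p q : V} {δ : ℝ}
    (h₁ : |‖p‖ ^ 2 / 2 - ‖q‖ ^ 2 / 2| ≤ δ)
    (h₂ : |‖p - (2 : ℝ) • q‖ ^ 2 / 2 - ‖q‖ ^ 2 / 2| ≤ δ) :
    |⟪q, p⟫ - ‖q‖ ^ 2| ≤ δ := by
  have hexpand : ‖p - (2 : ℝ) • q‖ ^ 2 = ‖p‖ ^ 2 - 4 * ⟪q, p⟫ + 4 * ‖q‖ ^ 2 := by
    rw [norm_sub_sq_real, real_inner_smul_right, norm_smul, Real.norm_two, real_inner_comm]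
    ring
  rw [hexpand] at h₂
  rw [abs_le] at h₁ h₂ ⊢
  constructor <;> linarith [h₁.1, h₁.2, h₂.1, h₂.2]

theorem shells_inter_subset_slab_inter_cylinder {q : V} (hq : q ≠ 0) (δ : ℝ) :
    {p : V | |‖p‖ ^ 2 / 2 - ‖q‖ ^ 2 / 2| ≤ δ ∧
        |‖p - (2 : ℝ) • q‖ ^ 2 / 2 - ‖q‖ ^ 2 / 2| ≤ δ} ⊆
      {p | |⟪‖q‖⁻¹ • q, p⟫ - ‖q‖| ≤ δ / ‖q‖ ∧
        ‖p‖ ^ 2 - ⟪‖q‖⁻¹ • q, p⟫ ^ 2 ≤ (2 * √δ) ^ 2} := by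
  rintro p ⟨h₁, h₂⟩
  have hr : 0 < ‖q‖ := norm_pos_iff.2 hq
  have hδ : 0 ≤ δ := (abs_nonneg _).trans h₁
  have hslab : |⟪‖q‖⁻¹ • q, p⟫ - ‖q‖| ≤ δ / ‖q‖ := by
    have hcoord : ⟪‖q‖⁻¹ • q, p⟫ - ‖q‖ = (⟪q, p⟫ - ‖q‖ ^ 2) / ‖q‖ := by
      rw [real_inner_smul_left]
      field_simp
    rw [hcoord, abs_div, abs_of_pos hr]
    exact div_le_div_of_nonneg_right (abs_inner_sub_norm_sq_le_of_mem_shells h₁ h₂) hr.le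
  have hcoord_sq : ‖q‖ ^ 2 - 2 * δ ≤ ⟪‖q‖⁻¹ • q, p⟫ ^ 2 := by
    have := sq_sub_two_mul_le_sq_of_sub_le (a := δ / ‖q‖) (t := ⟪‖q‖⁻¹ • q, p⟫) hr.le
      (by linarith [(abs_le.1 hslab).1])
    rwa [mul_assoc, mul_div_cancel₀ _ hr.ne'] at this
  refine ⟨hslab, ?_⟩
  rw [mul_pow, Real.sq_sqrt hδ]
  linarith [(abs_le.1 h₁).2]

variable [FiniteDimensional ℝ V] [MeasurableSpace V] [BorelSpace V]

theorem OrthonormalBasis.volume_setOf_repr_mem_Icc (b : OrthonormalBasis ι ℝ V)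
    (lo hi : ι → ℝ) :
    volume {p : V | ∀ i, b.repr p i ∈ Icc (lo i) (hi i)} = ∏ i, ENNReal.ofReal (hi i - lo i) := by
  have hmp := (PiLp.volume_preserving_ofLp ι).comp b.measurePreserving_repr
  rw [← Real.volume_Icc_pi, ← hmp.measure_preimage measurableSet_Icc.nullMeasurableSet]
  congr 1
  ext p
  simp [Pi.le_def, forall_and]

theorem volume_slab_inter_cylinder_le {u : V} (hu : ‖u‖ = 1) (c a : ℝ) {ρ : ℝ}
    (hρ : 0 ≤ ρ) :
    volume {p : V | |⟪u, p⟫ - c| ≤ a ∧ ‖p‖ ^ 2 - ⟪u, p⟫ ^ 2 ≤ ρ ^ 2} ≤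
      ENNReal.ofReal (2 * a) * ENNReal.ofReal (2 * ρ) ^ (finrank ℝ V - 1) := by
  classical
  obtain ⟨i₀, b, hb⟩ := exists_orthonormalBasis_fin_apply_eq hu
  have hsub : {p : V | |⟪u, p⟫ - c| ≤ a ∧ ‖p‖ ^ 2 - ⟪u, p⟫ ^ 2 ≤ ρ ^ 2} ⊆
      {p | ∀ i, b.repr p i ∈ Icc (Function.update (fun _ => -ρ) i₀ (c - a) i)
        (Function.update (fun _ => ρ) i₀ (c + a) i)} := by
    rintro p ⟨hslab, hcyl⟩ i
    have hu_coord : b.repr p i₀ = ⟪u, p⟫ := by rw [b.repr_apply_apply, hb]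
    rcases eq_or_ne i i₀ with rfl | hi
    · simp only [Function.update_self, hu_coord, mem_Icc]
      constructor <;> linarith [abs_le.1 hslab]
    · simp only [Function.update_of_ne hi, mem_Icc, ← abs_le]
      have := b.sq_repr_apply_le_of_ne p hi
      rw [hu_coord] at this
      exact abs_le_of_sq_le_sq (by linarith) hρ
  refine (measure_mono hsub).trans_eq ?_
  rw [b.volume_setOf_repr_mem_Icc, Fintype.prod_eq_mul_prod_compl i₀,
    Finset.prod_congr rfl (g := fun _ => ENNReal.ofReal (2 * ρ)), Finset.prod_const,
    Finset.card_compl, Finset.card_singleton, Fintype.card_fin]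
  · rw [Function.update_self, Function.update_self, show c + a - (c - a) = 2 * a by ring]
  · intro i hi
    rw [Finset.mem_compl, Finset.mem_singleton] at hi
    rw [Function.update_of_ne hi, Function.update_of_ne hi, sub_neg_eq_add, two_mul]

theorem volume_setOf_mem_shells_le {q : V} (hq : q ≠ 0) (δ : ℝ) :
    volume {p : V | |‖p‖ ^ 2 / 2 - ‖q‖ ^ 2 / 2| ≤ δ ∧
        |‖p - (2 : ℝ) • q‖ ^ 2 / 2 - ‖q‖ ^ 2 / 2| ≤ δ} ≤
      ENNReal.ofReal (2 * (δ / ‖q‖)) * ENNReal.ofReal (2 * (2 * √δ)) ^ (finrank ℝ V - 1) :=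
  (measure_mono (shells_inter_subset_slab_inter_cylinder hq δ)).trans
    (volume_slab_inter_cylinder_le (norm_smul_inv_norm hq) _ _ (by positivity))

end InnerProductSpace

theorem shell_intersection_measure_general (d : ℕ) (E β : ℝ) (hE : 0 < E) :
    ∃ C : ℝ, ∀ L : ℝ, 1 ≤ L → ∀ q : EuclideanSpace ℝ (Fin d), ‖q‖ ^ 2 / 2 = E →
      volume {p : EuclideanSpace ℝ (Fin d) |
          |‖p‖ ^ 2 / 2 - E| ≤ β / L ∧ |‖p - (2 : ℝ) • q‖ ^ 2 / 2 - E| ≤ β / L} ≤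
        ENNReal.ofReal (C * L ^ (-(((d : ℝ) + 1) / 2))) := by
  refine ⟨2 * β / √(2 * E) * (4 * √β) ^ (d - 1), fun L hL q hq => ?_⟩
  subst hq
  have hL : 0 ≤ L := zero_le_one.trans hL
  have hq : q ≠ 0 := by rintro rfl; simp at hE
  obtain _ | k := d
  · exact absurd (Subsingleton.elim q 0) hq
  refine (volume_setOf_mem_shells_le hq (β / L)).trans_eq ?_
  have hnorm : √(2 * (‖q‖ ^ 2 / 2)) = ‖q‖ := by
    rw [mul_div_cancel₀ _ two_ne_zero, Real.sqrt_sq (norm_nonneg q)]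
  have hβL : β / L = β * (√L)⁻¹ ^ 2 := by rw [inv_pow, Real.sq_sqrt hL, div_eq_mul_inv]
  have hexponent : ((k + 1 : ℕ) : ℝ) + 1 = ((k + 2 : ℕ) : ℝ) := by push_cast; ring
  rw [finrank_euclideanSpace_fin, hexponent, Real.rpow_neg_natCast_div_two hL, hnorm,
    Nat.add_sub_cancel, ← ENNReal.ofReal_pow (by positivity),
    ← ENNReal.ofReal_mul' (by positivity), Real.sqrt_div' _ hL, hβL]
  congr 1
  ring

/-- Intersection of nearly tangent spherical shells: fix `E > 0` and `β > 0`.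
There is a constant `C` (depending only on `d`, `E`, `β`) such that for all
`L ≥ 1` and all `q ∈ ℝ^d` with `|q|²/2 = E`, the set of points `p` with
`||p|²/2 - E| ≤ β/L` and `||p - 2q|²/2 - E| ≤ β/L` has Lebesgue measure at
most `C · L^(-(d+1)/2)`. -/
theorem shell_intersection_measure (d : ℕ) (E β : ℝ) (hE : 0 < E) (hβ : 0 < β) :
    ∃ C : ℝ, ∀ L : ℝ, 1 ≤ L → ∀ q : EuclideanSpace ℝ (Fin d), ‖q‖ ^ 2 / 2 = E →
      volume {p : EuclideanSpace ℝ (Fin d) |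
          |‖p‖ ^ 2 / 2 - E| ≤ β / L ∧ |‖p - (2 : ℝ) • q‖ ^ 2 / 2 - E| ≤ β / L} ≤
        ENNReal.ofReal (C * L ^ (-(((d : ℝ) + 1) / 2))) :=
  shell_intersection_measure_general d E β hE
end
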